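/- arXiv:math/9608211 — 3 statements merged into one kernel-verified Lean document; each statement's English description precedes it below -/
import Mathlib

section
/- Let s ≥ 1, let U ∈ GL_s(ℤ) be an integer matrix invertible over ℤ, and set A = Uᵗ(−E)U, where E is the s×s identity matrix. If w ∈ ℤ^s is characteristic for A, then the integer −s − wᵗAw is divisible by 8. (Integrality of the Neumann–Siebenmann invariant μ̄ = (1/8)(sign P(Γ) − w·w) in the negative definite diagonalizable case.) -/
open Matrix

/-- A vector `w ∈ ℤ^s` is *characteristic* for a symmetric `s × s` integer matrix `A`
if `wᵗAx ≡ xᵗAx (mod 2)` for every `x ∈ ℤ^s`. -/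
def IsCharacteristic {s : ℕ} (A : Matrix (Fin s) (Fin s) ℤ) (w : Fin s → ℤ) : Prop :=
  ∀ x : Fin s → ℤ, w ⬝ᵥ A.mulVec x ≡ x ⬝ᵥ A.mulVec x [ZMOD 2]

lemma eight_dvd_odd_sq_sub_one {m : ℤ} (hm : Odd m) : (8 : ℤ) ∣ m * m - 1 := by
  obtain ⟨k, rfl⟩ := hm
  obtain ⟨j, hj⟩ := Int.even_mul_succ_self k
  exact ⟨j, by nlinarith [hj]⟩

lemma key_dot {s : ℕ} (U A : Matrix (Fin s) (Fin s) ℤ)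
    (hA : A = Uᵀ * (-(1 : Matrix (Fin s) (Fin s) ℤ)) * U)
    (w x : Fin s → ℤ) :
    w ⬝ᵥ A.mulVec x = -(U.mulVec w ⬝ᵥ U.mulVec x) := by
  subst hA
  rw [Matrix.mul_assoc, ← Matrix.mulVec_mulVec, Matrix.dotProduct_mulVec,
    Matrix.vecMul_transpose, Matrix.neg_mul, Matrix.one_mul,
    Matrix.neg_mulVec, dotProduct_neg]

/-- If `A = Uᵗ(-E)U` with `U ∈ GL_s(ℤ)` and `w` is characteristic for `A`, then the
integer `-s - wᵗAw` (that is, `sign(A) - w·w`) is divisible by `8`. -/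
theorem eight_dvd_sign_sub_square {s : ℕ} (hs : 1 ≤ s)
    (U A : Matrix (Fin s) (Fin s) ℤ) (hU : IsUnit U.det)
    (hA : A = Uᵀ * (-(1 : Matrix (Fin s) (Fin s) ℤ)) * U)
    (w : Fin s → ℤ) (hw : IsCharacteristic A w) :
    (8 : ℤ) ∣ (-(s : ℤ) - w ⬝ᵥ A.mulVec w) := by
  set v := U.mulVec w with hv
  -- each component of v is odd
  have hodd : ∀ i, Odd (v i) := by
    intro i
    have hUinv : U * U⁻¹ = 1 := Matrix.mul_nonsing_inv U hU
    set x : Fin s → ℤ := (U⁻¹).mulVec (Pi.single i 1) with hx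
    have hUx : U.mulVec x = Pi.single i 1 := by
      rw [hx, Matrix.mulVec_mulVec, hUinv, Matrix.one_mulVec]
    have h1 := hw x
    rw [key_dot U A hA w x, key_dot U A hA x x, hUx] at h1
    have hl : v ⬝ᵥ Pi.single i 1 = v i := by simp [dotProduct, Pi.single_apply]
    have hr : (Pi.single i 1 : Fin s → ℤ) ⬝ᵥ Pi.single i 1 = 1 := by
      simp [dotProduct, Pi.single_apply]
    rw [hl, hr] at h1
    have h2 : (2 : ℤ) ∣ (-(v i) - (-1)) := (Int.ModEq.dvd h1.symm)
    obtain ⟨c, hc⟩ := h2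
    exact ⟨-c, by linarith⟩
  have hws : w ⬝ᵥ A.mulVec w = -(v ⬝ᵥ v) := key_dot U A hA w w
  rw [hws]
  have : -(s : ℤ) - -(v ⬝ᵥ v) = ∑ i : Fin s, (v i * v i - 1) := by
    simp [dotProduct, Finset.sum_sub_distrib]
    ring
  rw [this]
  exact Finset.dvd_sum fun i _ => eight_dvd_odd_sq_sub_one (hodd i)
end

section
/- The Fintushel–Stern invariant of Σ(2,11,19) equals −1; that is, with a = 2·11·19 = 418, one has (2/418) − 3 + 3 + Σ_{i=1}^{3} (2/aᵢ) Σ_{k=1}^{aᵢ−1} cot(π·418·k/aᵢ²) · cot(πk/aᵢ) · sin²(πk/aᵢ) = −1, where (a₁, a₂, a₃) = (2, 11, 19) and cot x = cos x / sin x. -/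
open Real Finset

/-- The Fintushel–Stern invariant
`R(a₁,…,a_n) = 2/a - 3 + n + Σᵢ (2/aᵢ) Σ_{k=1}^{aᵢ-1} cot(πak/aᵢ²) cot(πk/aᵢ) sin²(πk/aᵢ)`
where `a = a₁⋯a_n` and `cot x = cos x / sin x`. -/
noncomputable def fintushelSternR {n : ℕ} (a : Fin n → ℕ) : ℝ :=
  2 / (∏ j, (a j : ℝ)) - 3 + n +
    ∑ i, (2 / (a i : ℝ)) *
      ∑ k ∈ Finset.Icc 1 (a i - 1),
        (Real.cos (Real.pi * (∏ j, (a j : ℝ)) * k / (a i : ℝ) ^ 2) /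
            Real.sin (Real.pi * (∏ j, (a j : ℝ)) * k / (a i : ℝ) ^ 2)) *
          (Real.cos (Real.pi * k / (a i : ℝ)) / Real.sin (Real.pi * k / (a i : ℝ))) *
            (Real.sin (Real.pi * k / (a i : ℝ))) ^ 2

/-!
Write `a = aᵢ qᵢ` and let `lᵢ` be the inverse of `qᵢ` modulo `aᵢ`. Since
`cot θ sin² θ = sin (2θ) / 2` and `cot` is `π`-periodic, the `i`-th inner sum is
`½ Σₖ cot (π qᵢ k / aᵢ) sin (2πk / aᵢ)`, and the substitution `r = qᵢ k mod aᵢ` turns it into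
`½ Σᵣ cot (π r / aᵢ) sin (2π lᵢ r / aᵢ)`. The Dirichlet kernel gives
`cot θ sin (2lθ) = 2 Σ_{j<l} cos (2jθ) + cos (2lθ) - 1`, and `Σ_{k=1}^{p-1} cos (2πjk/p) = -1`
for `0 < j < p`, so the inner sum is `(aᵢ - 2lᵢ) / 2` and `R = 2/a - 3 + n + Σᵢ (1 - 2lᵢ/aᵢ)`.
For `(2, 11, 19)` the inverses are `(1, 9, 13)`.
-/

theorem Real.cot_add_nat_mul_pi (x : ℝ) (n : ℕ) : cot (x + n * π) = cot x := by
  rw [cot_eq_cos_div_sin, cot_eq_cos_div_sin, cos_add_nat_mul_pi, sin_add_nat_mul_pi,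
    mul_div_mul_left _ _ (pow_ne_zero n (by norm_num))]

theorem pi_mul_div_eq_mod_add (n p : ℕ) (hp : p ≠ 0) :
    π * n / p = π * ↑(n % p) / p + ↑(n / p) * π := by
  conv_lhs => rw [← Nat.mod_add_div n p]
  push_cast
  field_simp

theorem sin_pi_mul_div_pos {k p : ℕ} (hk : 0 < k) (hkp : k < p) : 0 < sin (π * k / p) := by
  have hk' : (0 : ℝ) < k := by exact_mod_cast hk
  have hkp' : (k : ℝ) < p := by exact_mod_cast hkp
  apply sin_pos_of_pos_of_lt_pi (div_pos (mul_pos pi_pos hk') (hk'.trans hkp'))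
  rw [div_lt_iff₀ (hk'.trans hkp')]
  exact mul_lt_mul_of_pos_left hkp' pi_pos

theorem two_mul_sin_mul_sum_range_cos (θ : ℝ) (n : ℕ) :
    2 * sin θ * ∑ j ∈ range n, cos (2 * j * θ) = sin ((2 * n - 1) * θ) + sin θ := by
  induction n with
  | zero => simp [neg_mul, sin_neg]
  | succ n ih =>
    rw [sum_range_succ, mul_add, ih]
    have h₁ : (2 * ↑(n + 1) - 1) * θ = 2 * n * θ + θ := by push_cast; ring
    have h₂ : (2 * (n : ℝ) - 1) * θ = 2 * n * θ - θ := by ring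
    rw [h₁, h₂, sin_add, sin_sub]
    ring

theorem sum_Icc_cos_two_mul_pi_mul_div {p j : ℕ} (hj : 0 < j) (hjp : j < p) :
    ∑ k ∈ Icc 1 (p - 1), cos (2 * j * (π * k / p)) = -1 := by
  set φ := π * j / p
  have hsin : sin φ ≠ 0 := (sin_pi_mul_div_pos hj hjp).ne'
  have hp : (p : ℝ) ≠ 0 := Nat.cast_ne_zero.2 (by omega)
  have hrange : ∑ k ∈ range p, cos (2 * k * φ) = 0 := by
    have h := two_mul_sin_mul_sum_range_cos φ p
    have hend : (2 * (p : ℝ) - 1) * φ = -φ + j * (2 * π) := by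
      simp only [φ]; field_simp; ring
    rw [hend, sin_add_nat_mul_two_pi, sin_neg, neg_add_cancel] at h
    simpa [hsin] using h
  rw [range_eq_Ico, sum_eq_sum_Ico_succ_bot (by omega)] at hrange
  have hIcc : Icc 1 (p - 1) = Ico 1 p := by ext; simp only [mem_Icc, mem_Ico]; omega
  simp only [CharP.cast_eq_zero, mul_zero, zero_mul, cos_zero, zero_add] at hrange
  rw [hIcc, ← eq_neg_of_add_eq_zero_right hrange]
  refine sum_congr rfl fun k _ ↦ ?_
  simp only [φ]; ring_nf

theorem cot_mul_sin_two_mul_nat_mul {θ : ℝ} (hθ : sin θ ≠ 0) (l : ℕ) :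
    cot θ * sin (2 * l * θ) = 2 * ∑ j ∈ range l, cos (2 * j * θ) + cos (2 * l * θ) - 1 := by
  have h₁ := two_mul_sin_mul_sum_range_cos θ l
  have h₂ := two_mul_sin_mul_sum_range_cos θ (l + 1)
  rw [sum_range_succ] at h₂
  have e₁ : (2 * ↑(l + 1) - 1) * θ = 2 * l * θ + θ := by push_cast; ring
  have e₂ : (2 * (l : ℝ) - 1) * θ = 2 * l * θ - θ := by ring
  rw [e₁, sin_add] at h₂
  rw [e₂, sin_sub] at h₁
  rw [cot_eq_cos_div_sin, div_mul_eq_mul_div, div_eq_iff hθ]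
  linear_combination -(h₁ + h₂) / 2

theorem sum_Icc_cot_mul_sin_two_mul_nat_mul {p l : ℕ} (hl : 0 < l) (hlp : l < p) :
    ∑ k ∈ Icc 1 (p - 1), cot (π * k / p) * sin (2 * l * (π * k / p)) = p - 2 * l := by
  have hsin : ∀ k ∈ Icc 1 (p - 1), sin (π * k / p) ≠ 0 := fun k hk ↦
    (sin_pi_mul_div_pos (mem_Icc.1 hk).1 (by have := (mem_Icc.1 hk).2; omega)).ne'
  rw [sum_congr rfl fun k hk ↦ cot_mul_sin_two_mul_nat_mul (hsin k hk) l, sum_sub_distrib,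
    sum_add_distrib, ← mul_sum, sum_comm, sum_Icc_cos_two_mul_pi_mul_div hl hlp]
  obtain ⟨m, rfl⟩ : ∃ m, l = m + 1 := ⟨l - 1, by omega⟩
  have hcos : ∀ j ∈ range m, ∑ k ∈ Icc 1 (p - 1), cos (2 * (j + 1 : ℕ) * (π * k / p)) = -1 :=
    fun j hj ↦ sum_Icc_cos_two_mul_pi_mul_div (Nat.succ_pos j) (by have := mem_range.1 hj; omega)
  rw [sum_range_succ', sum_congr rfl hcos]
  simp only [CharP.cast_eq_zero, mul_zero, zero_mul, cos_zero, sum_const, Nat.card_Icc,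
    Nat.add_sub_cancel, card_range, nsmul_eq_mul, Nat.cast_sub (by omega : 1 ≤ p)]
  push_cast
  ring

theorem mul_mod_mul_mod_of_mul_mod_eq_one {p a b : ℕ} (hab : a * b % p = 1) {k : ℕ} (hk : k < p) :
    b * (a * k % p) % p = k := by
  rw [Nat.mul_mod_mod, ← mul_assoc, mul_comm b a, Nat.mul_mod, hab, one_mul, Nat.mod_mod,
    Nat.mod_eq_of_lt hk]

theorem sum_Icc_cot_mul_sin_two_mul_reindex {p q l : ℕ} (hql : q * l % p = 1) :
    ∑ k ∈ Icc 1 (p - 1), cot (π * ↑(q * k) / p) * sin (2 * (π * k / p)) =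
      ∑ r ∈ Icc 1 (p - 1), cot (π * r / p) * sin (2 * l * (π * r / p)) := by
  have hlq : l * q % p = 1 := by rwa [mul_comm]
  have hmaps : ∀ {a b : ℕ}, a * b % p = 1 → ∀ k ∈ Icc 1 (p - 1), a * k % p ∈ Icc 1 (p - 1) := by
    intro a b hab k hk
    rw [mem_Icc] at hk ⊢
    have hback := mul_mod_mul_mod_of_mul_mod_eq_one hab (k := k) (by omega)
    constructor
    · by_contra h0
      rw [Nat.lt_one_iff.1 (not_le.1 h0), mul_zero, Nat.zero_mod] at hback
      omega
    · exact Nat.le_sub_one_of_lt (Nat.mod_lt _ (by omega))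
  have hlt : ∀ k ∈ Icc 1 (p - 1), k < p := fun k hk ↦ by have := mem_Icc.1 hk; omega
  refine sum_nbij' (fun k ↦ q * k % p) (fun r ↦ l * r % p) (hmaps hql) (hmaps hlq)
    (fun k hk ↦ mul_mod_mul_mod_of_mul_mod_eq_one hql (hlt k hk))
    (fun r hr ↦ mul_mod_mul_mod_of_mul_mod_eq_one hlq (hlt r hr)) fun k hk ↦ ?_
  have hp : p ≠ 0 := by have := hlt k hk; omega
  have hangle : 2 * l * (π * ↑(q * k % p) / p) = 2 * (π * ↑(l * (q * k % p)) / p) := by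
    push_cast; ring
  rw [pi_mul_div_eq_mod_add (q * k) p hp, cot_add_nat_mul_pi, hangle,
    pi_mul_div_eq_mod_add (l * (q * k % p)) p hp,
    mul_mod_mul_mod_of_mul_mod_eq_one hql (hlt k hk), mul_add, mul_left_comm,
    sin_add_nat_mul_two_pi]

theorem sum_Icc_cot_mul_cot_mul_sin_sq {p q l : ℕ} (hl : 0 < l) (hlp : l < p)
    (hql : q * l % p = 1) :
    ∑ k ∈ Icc 1 (p - 1), cot (π * (p * q) * k / p ^ 2) * cot (π * k / p) * sin (π * k / p) ^ 2 =
      (p - 2 * l) / 2 := by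
  have hp : (p : ℝ) ≠ 0 := Nat.cast_ne_zero.2 (by omega)
  have hterm : ∀ k ∈ Icc 1 (p - 1),
      cot (π * (p * q) * k / p ^ 2) * cot (π * k / p) * sin (π * k / p) ^ 2 =
        cot (π * ↑(q * k) / p) * sin (2 * (π * k / p)) / 2 := by
    intro k hk
    have hsin := (sin_pi_mul_div_pos (p := p) (mem_Icc.1 hk).1 (by have := mem_Icc.1 hk; omega)).ne'
    have harg : π * (p * q) * k / p ^ 2 = π * ↑(q * k) / p := by
      push_cast; field_simp
    rw [harg, sin_two_mul, cot_eq_cos_div_sin (π * k / p)]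
    field_simp
  rw [sum_congr rfl hterm, ← sum_div, sum_Icc_cot_mul_sin_two_mul_reindex hql,
    sum_Icc_cot_mul_sin_two_mul_nat_mul hl hlp]

theorem fintushelSternR_eq {n : ℕ} (a l : Fin n → ℕ) (hl : ∀ i, 0 < l i ∧ l i < a i)
    (hinv : ∀ i, (∏ j, a j) / a i * l i % a i = 1) :
    fintushelSternR a = 2 / ∏ j, (a j : ℝ) - 3 + n + ∑ i, (1 - 2 * (l i : ℝ) / a i) := by
  unfold fintushelSternR
  congr 1
  refine sum_congr rfl fun i _ ↦ ?_
  have hai : (a i : ℝ) ≠ 0 := Nat.cast_ne_zero.2 (by have := hl i; omega)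
  have hprod : ∏ j, (a j : ℝ) = a i * ↑((∏ j, a j) / a i) := by
    rw [← Nat.cast_prod, ← Nat.cast_mul, Nat.mul_div_cancel' (dvd_prod_of_mem a (mem_univ i))]
  simp only [hprod, ← cot_eq_cos_div_sin]
  rw [sum_Icc_cot_mul_cot_mul_sin_sq (hl i).1 (hl i).2 (hinv i)]
  field_simp

/-- The Fintushel–Stern invariant of `Σ(2,11,19)` equals `-1`. -/
theorem fintushelStern_two_eleven_nineteen :
    fintushelSternR ![2, 11, 19] = -1 := by
  rw [fintushelSternR_eq ![2, 11, 19] ![1, 9, 13] (by decide) (by decide)]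
  simp only [Fin.sum_univ_three, Fin.prod_univ_three, Matrix.cons_val_zero, Matrix.cons_val_one,
    Matrix.cons_val_two, Matrix.head_cons, Matrix.tail_cons]
  norm_num
end

section
/- The Fintushel–Stern invariant of Σ(3,5,7) equals 1; that is, with a = 3·5·7 = 105, one has (2/105) − 3 + 3 + Σ_{i=1}^{3} (2/aᵢ) Σ_{k=1}^{aᵢ−1} cot(π·105·k/aᵢ²) · cot(πk/aᵢ) · sin²(πk/aᵢ) = 1, where (a₁, a₂, a₃) = (3, 5, 7) and cot x = cos x / sin x. -/
open Real Finset

lemma FS_sum_cos_two_pi (n : ℕ) (hn : 2 ≤ n) :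
    ∑ k ∈ range n, Real.cos (2 * π * k / n) = 0 := by
  have h := (Complex.isPrimitiveRoot_exp n (by omega)).geom_sum_eq_zero (by omega)
  have h2 : ∀ k : ℕ, Complex.exp (2 * π * Complex.I / n) ^ k =
      Complex.exp ((2 * π * k / n : ℝ) * Complex.I) := by
    intro k
    rw [← Complex.exp_nat_mul]
    congr 1
    push_cast
    ring
  have h3 : (∑ k ∈ range n, Complex.exp ((2 * π * k / n : ℝ) * Complex.I)).re = 0 := by
    simp only [← h2, h]
    simp
  rw [Complex.re_sum] at h3
  simp only [Complex.exp_ofReal_mul_I_re] at h3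
  exact h3

lemma FS_sin_ne (a b : ℝ) (h1 : 0 < a) (h2 : a < b) : Real.sin (π * a / b) ≠ 0 := by
  have hb : 0 < b := h1.trans h2
  refine ne_of_gt (Real.sin_pos_of_pos_of_lt_pi (by positivity) ?_)
  rw [div_lt_iff₀ hb]
  nlinarith [Real.pi_pos]

lemma FS_cot_pos (φ : ℝ) (m : ℤ) (h : Real.sin φ ≠ 0) :
    Real.cos (φ + m * (2 * π)) / Real.sin (φ + m * (2 * π)) *
      (Real.cos φ / Real.sin φ) * Real.sin φ ^ 2 = Real.cos φ ^ 2 := by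
  rw [Real.cos_add_int_mul_two_pi, Real.sin_add_int_mul_two_pi]
  field_simp

lemma FS_cot_neg (φ : ℝ) (m : ℤ) (h : Real.sin φ ≠ 0) :
    Real.cos (-φ + m * (2 * π)) / Real.sin (-φ + m * (2 * π)) *
      (Real.cos φ / Real.sin φ) * Real.sin φ ^ 2 = -Real.cos φ ^ 2 := by
  rw [Real.cos_add_int_mul_two_pi, Real.sin_add_int_mul_two_pi, Real.cos_neg, Real.sin_neg]
  field_simp


/-- The Fintushel–Stern invariant of `Σ(3,5,7)` equals `1`. -/
theorem fintushelStern_three_five_seven :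
    fintushelSternR ![3, 5, 7] = 1 := by
  unfold fintushelSternR
  simp only [Fin.sum_univ_three, Fin.prod_univ_three, Matrix.cons_val_zero, Matrix.cons_val_one,
    Matrix.head_cons, Matrix.cons_val_two, Matrix.tail_cons]
  norm_num
  rw [show (Finset.Icc 1 2 : Finset ℕ) = {1, 2} by rfl,
      show (Finset.Icc 1 4 : Finset ℕ) = {1, 2, 3, 4} by rfl,
      show (Finset.Icc 1 6 : Finset ℕ) = {1, 2, 3, 4, 5, 6} by rfl]
  rw [Finset.sum_insert (by decide), Finset.sum_singleton,
      Finset.sum_insert (by decide), Finset.sum_insert (by decide),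
      Finset.sum_insert (by decide), Finset.sum_singleton,
      Finset.sum_insert (by decide), Finset.sum_insert (by decide),
      Finset.sum_insert (by decide), Finset.sum_insert (by decide),
      Finset.sum_insert (by decide), Finset.sum_singleton]
  push_cast
  rw [show π * 105 * 1 / 9 = -(π * 1 / 3) + (6 : ℤ) * (2 * π) by push_cast; ring,
      show π * 105 * 2 / 9 = -(π * 2 / 3) + (12 : ℤ) * (2 * π) by push_cast; ring,
      show π * 105 * 1 / 25 = π * 1 / 5 + (2 : ℤ) * (2 * π) by push_cast; ring,
      show π * 105 * 2 / 25 = π * 2 / 5 + (4 : ℤ) * (2 * π) by push_cast; ring,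
      show π * 105 * 3 / 25 = π * 3 / 5 + (6 : ℤ) * (2 * π) by push_cast; ring,
      show π * 105 * 4 / 25 = π * 4 / 5 + (8 : ℤ) * (2 * π) by push_cast; ring,
      show π * 105 * 1 / 49 = π * 1 / 7 + (1 : ℤ) * (2 * π) by push_cast; ring,
      show π * 105 * 2 / 49 = π * 2 / 7 + (2 : ℤ) * (2 * π) by push_cast; ring,
      show π * 105 * 3 / 49 = π * 3 / 7 + (3 : ℤ) * (2 * π) by push_cast; ring,
      show π * 105 * 4 / 49 = π * 4 / 7 + (4 : ℤ) * (2 * π) by push_cast; ring,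
      show π * 105 * 5 / 49 = π * 5 / 7 + (5 : ℤ) * (2 * π) by push_cast; ring,
      show π * 105 * 6 / 49 = π * 6 / 7 + (6 : ℤ) * (2 * π) by push_cast; ring]
  rw [FS_cot_neg _ _ (FS_sin_ne 1 3 (by norm_num) (by norm_num)),
      FS_cot_neg _ _ (FS_sin_ne 2 3 (by norm_num) (by norm_num)),
      FS_cot_pos _ _ (FS_sin_ne 1 5 (by norm_num) (by norm_num)),
      FS_cot_pos _ _ (FS_sin_ne 2 5 (by norm_num) (by norm_num)),
      FS_cot_pos _ _ (FS_sin_ne 3 5 (by norm_num) (by norm_num)),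
      FS_cot_pos _ _ (FS_sin_ne 4 5 (by norm_num) (by norm_num)),
      FS_cot_pos _ _ (FS_sin_ne 1 7 (by norm_num) (by norm_num)),
      FS_cot_pos _ _ (FS_sin_ne 2 7 (by norm_num) (by norm_num)),
      FS_cot_pos _ _ (FS_sin_ne 3 7 (by norm_num) (by norm_num)),
      FS_cot_pos _ _ (FS_sin_ne 4 7 (by norm_num) (by norm_num)),
      FS_cot_pos _ _ (FS_sin_ne 5 7 (by norm_num) (by norm_num)),
      FS_cot_pos _ _ (FS_sin_ne 6 7 (by norm_num) (by norm_num))]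
  simp only [Real.cos_sq]
  have h3 := FS_sum_cos_two_pi 3 (by norm_num)
  have h5 := FS_sum_cos_two_pi 5 (by norm_num)
  have h7 := FS_sum_cos_two_pi 7 (by norm_num)
  rw [Finset.sum_range_succ, Finset.sum_range_succ, Finset.sum_range_succ,
      Finset.sum_range_zero] at h3
  rw [Finset.sum_range_succ, Finset.sum_range_succ, Finset.sum_range_succ,
      Finset.sum_range_succ, Finset.sum_range_succ, Finset.sum_range_zero] at h5
  rw [Finset.sum_range_succ, Finset.sum_range_succ, Finset.sum_range_succ,
      Finset.sum_range_succ, Finset.sum_range_succ, Finset.sum_range_succ,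
      Finset.sum_range_succ, Finset.sum_range_zero] at h7
  push_cast at h3 h5 h7
  norm_num at h3 h5 h7
  ring_nf
  ring_nf at h3 h5 h7
  linarith [h3, h5, h7]
end
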